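/- arXiv:0904.0868 — 3 statements merged into one kernel-verified Lean document; each statement's English description precedes it below -/
import Mathlib

section
/- Let η : ℝ → [0,∞) be a smooth function supported in [0, ε] with ∫₀^∞ η = 1, and let ζ(x) = ∫₀ˣ η and Z(x) = ∫₀ˣ ζ. For a fixed real constant K > 0 and n ≥ 1, define K_η = ∫₀^∞ (n/r^{n+1}) η(log(K rⁿ)) dr, K_ζ = ∫₀^∞ (n/r^{n+1}) ζ(log(K rⁿ)) dr, and K_Z = ∫₀^∞ (n/r^{n+1}) Z(log(K rⁿ)) dr. Then K_η = K_ζ = K_Z = e^{δ(η)} · K, where e^{δ(η)} := ∫₀^∞ η(y) e^{−y} dy. -/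
open MeasureTheory Set intervalIntegral Real

/-- Change of variables `y = log (K rⁿ)` for integrals over `Ioi 0`. -/
lemma stmt2_subst (K : ℝ) (hK : 0 < K) (n : ℕ) (hn : 1 ≤ n) (f : ℝ → ℝ) :
    ∫ r in Ioi (0:ℝ), ((n:ℝ) / r^(n+1)) * f (Real.log (K * r^n))
      = ∫ y, f y * (K * Real.exp (-y)) := by
  have hn0 : (n:ℝ) ≠ 0 := Nat.cast_ne_zero.mpr (by omega)
  set φ : ℝ → ℝ := fun r => Real.log (K * r ^ n) with hφ
  have himg : φ '' Ioi 0 = univ := by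
    ext y
    simp only [mem_image, mem_univ, iff_true]
    have hd : (0:ℝ) < Real.exp y / K := div_pos (Real.exp_pos y) hK
    refine ⟨(Real.exp y / K) ^ (1/(n:ℝ)), mem_Ioi.mpr (Real.rpow_pos_of_pos hd _), ?_⟩
    have hr : ((Real.exp y / K) ^ (1/(n:ℝ))) ^ n = Real.exp y / K := by
      rw [← Real.rpow_natCast ((Real.exp y / K) ^ (1/(n:ℝ))) n,
        ← Real.rpow_mul hd.le, one_div, inv_mul_cancel₀ hn0, Real.rpow_one]
    rw [hφ]
    simp only [hr]
    rw [mul_div_cancel₀ _ hK.ne', Real.log_exp]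
  have hderiv : ∀ x ∈ Ioi (0:ℝ), HasDerivWithinAt φ ((n:ℝ)/x) (Ioi 0) x := by
    intro x hx
    have hx0 : (0:ℝ) < x := hx
    have h1 : HasDerivAt (fun r : ℝ => K * r ^ n) (K * ((n:ℝ) * x ^ (n-1))) x :=
      (hasDerivAt_pow n x).const_mul K
    have h2 := h1.log (ne_of_gt (mul_pos hK (pow_pos hx0 n)))
    have hxp : x ^ (n-1) * x = x ^ n := by
      rw [← pow_succ, Nat.sub_add_cancel hn]
    have : K * ((n:ℝ) * x ^ (n-1)) / (K * x ^ n) = (n:ℝ)/x := by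
      rw [← hxp]; field_simp
    rw [this] at h2
    exact h2.hasDerivWithinAt
  have hinj : InjOn φ (Ioi 0) := by
    intro a ha b hb hab
    have ha' : (0:ℝ) < K * a ^ n := mul_pos hK (pow_pos ha n)
    have hb' : (0:ℝ) < K * b ^ n := mul_pos hK (pow_pos hb n)
    have := congrArg Real.exp hab
    rw [Real.exp_log ha', Real.exp_log hb'] at this
    have hab' : a ^ n = b ^ n := mul_left_cancel₀ hK.ne' this
    exact (pow_left_strictMonoOn₀ (M₀ := ℝ) (by omega)).injOn
      (show (0:ℝ) ≤ a from le_of_lt ha) (show (0:ℝ) ≤ b from le_of_lt hb) hab'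
  have key := integral_image_eq_integral_abs_deriv_smul measurableSet_Ioi hderiv hinj
    (fun y => f y * (K * Real.exp (-y)))
  rw [himg, setIntegral_univ] at key
  rw [key]
  apply setIntegral_congr_fun measurableSet_Ioi
  intro x hx
  have hx0 : (0:ℝ) < x := hx
  have hKx : (0:ℝ) < K * x ^ n := mul_pos hK (pow_pos hx0 n)
  have hexp : Real.exp (-φ x) = (K * x ^ n)⁻¹ := by
    rw [Real.exp_neg, Real.exp_log hKx]
  dsimp only
  rw [smul_eq_mul, hexp, abs_of_pos (div_pos (by positivity) hx0)]
  rw [pow_succ]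
  simp only [hφ]
  field_simp

/-- The key computational identity: for `K > 0` and `n ≥ 1`,
`∫₀^∞ (n/r^{n+1}) η(log(K rⁿ)) dr = ∫₀^∞ (n/r^{n+1}) ζ(log(K rⁿ)) dr
 = ∫₀^∞ (n/r^{n+1}) Z(log(K rⁿ)) dr = e^{δ(η)} K`, where `e^{δ(η)} = ∫₀^∞ η(y) e^{−y} dy`. -/
theorem stmt2 (ε : ℝ) (hε : 0 < ε) (η : ℝ → ℝ)
    (hsmooth : ContDiff ℝ (⊤ : ℕ∞) η) (hnn : ∀ y, 0 ≤ η y)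
    (hsupp : Function.support η ⊆ Icc 0 ε)
    (hint : ∫ y in Ioi (0:ℝ), η y = 1)
    (ζ Z : ℝ → ℝ)
    (hζ : ∀ x, ζ x = ∫ y in (0:ℝ)..x, η y)
    (hZ : ∀ x, Z x = ∫ y in (0:ℝ)..x, ζ y)
    (K : ℝ) (hK : 0 < K) (n : ℕ) (hn : 1 ≤ n) :
    (∫ r in Ioi (0:ℝ), ((n:ℝ) / r^(n+1)) * η (Real.log (K * r^n))
        = (∫ y in Ioi (0:ℝ), η y * Real.exp (-y)) * K)
    ∧ (∫ r in Ioi (0:ℝ), ((n:ℝ) / r^(n+1)) * ζ (Real.log (K * r^n))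
        = (∫ y in Ioi (0:ℝ), η y * Real.exp (-y)) * K)
    ∧ (∫ r in Ioi (0:ℝ), ((n:ℝ) / r^(n+1)) * Z (Real.log (K * r^n))
        = (∫ y in Ioi (0:ℝ), η y * Real.exp (-y)) * K) := by
  have hηc : Continuous η := hsmooth.continuous
  -- η vanishes off Icc 0 ε
  have hη0 : ∀ y, y < 0 → η y = 0 := by
    intro y hy
    by_contra h
    exact absurd ((hsupp h).1) (not_le.mpr hy)
  have hη0' : ∀ y, ε < y → η y = 0 := by
    intro y hy
    by_contra h
    exact absurd ((hsupp h).2) (not_le.mpr hy)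
  have hηcs : HasCompactSupport η :=
    HasCompactSupport.intro isCompact_Icc (fun x hx => by
      by_contra h; exact hx (hsupp h))
  have hηint : Integrable η := hηc.integrable_of_hasCompactSupport hηcs
  -- ζ basics
  have hζ0 : ∀ x ≤ 0, ζ x = 0 := by
    intro x hx
    rw [hζ x, intervalIntegral.integral_symm,
      intervalIntegral.integral_of_le hx]
    rw [neg_eq_zero]
    apply setIntegral_eq_zero_of_ae_eq_zero
    have h0 : ∀ᵐ y : ℝ, y ≠ 0 := by
      have : (volume ({0} : Set ℝ)) = 0 := measure_singleton 0
      exact measure_eq_zero_iff_ae_notMem.mp this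
    filter_upwards [h0] with y hy hmem
    rcases lt_or_eq_of_le hmem.2 with h | h
    · exact hη0 y h
    · exact absurd h hy
  have hζnn : ∀ x, 0 ≤ ζ x := by
    intro x
    rcases le_or_gt x 0 with h | h
    · rw [hζ0 x h]
    · rw [hζ x]
      apply intervalIntegral.integral_nonneg h.le (fun y _ => hnn y)
  have hζle : ∀ x, ζ x ≤ 1 := by
    intro x
    rcases le_or_gt x 0 with h | h
    · rw [hζ0 x h]; norm_num
    · rw [hζ x, intervalIntegral.integral_of_le h.le, ← hint]
      apply setIntegral_mono_set hηint.integrableOn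
      · exact Filter.Eventually.of_forall (fun y => hnn y)
      · exact Filter.Eventually.of_forall (fun y hy => Ioc_subset_Ioi_self hy)
  have hζderiv : ∀ x, HasDerivAt ζ (η x) x := by
    intro x
    have := intervalIntegral.integral_hasDerivAt_right
      (hηc.intervalIntegrable 0 x) (hηc.stronglyMeasurableAtFilter volume (nhds x))
      hηc.continuousAt
    exact this.congr_of_eventuallyEq (Filter.Eventually.of_forall (fun y => hζ y))
  have hζc : Continuous ζ := by
    rw [continuous_iff_continuousAt]
    exact fun x => (hζderiv x).continuousAt
  -- Z basics
  have hZ0 : ∀ x ≤ 0, Z x = 0 := by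
    intro x hx
    rw [hZ x, intervalIntegral.integral_symm,
      intervalIntegral.integral_of_le hx, neg_eq_zero]
    apply setIntegral_eq_zero_of_forall_eq_zero
    exact fun y hy => hζ0 y hy.2
  have hZnn : ∀ x, 0 ≤ Z x := by
    intro x
    rcases le_or_gt x 0 with h | h
    · rw [hZ0 x h]
    · rw [hZ x]
      exact intervalIntegral.integral_nonneg h.le (fun y _ => hζnn y)
  have hZle : ∀ x, 0 ≤ x → Z x ≤ x := by
    intro x hx
    rw [hZ x]
    calc ∫ y in (0:ℝ)..x, ζ y ≤ ∫ _ in (0:ℝ)..x, (1:ℝ) := by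
          apply intervalIntegral.integral_mono_on hx
            (hζc.intervalIntegrable 0 x) (intervalIntegrable_const)
          exact fun y _ => hζle y
      _ = x := by simp
  have hZderiv : ∀ x, HasDerivAt Z (ζ x) x := by
    intro x
    have := intervalIntegral.integral_hasDerivAt_right
      (hζc.intervalIntegrable 0 x) (hζc.stronglyMeasurableAtFilter volume (nhds x))
      hζc.continuousAt
    exact this.congr_of_eventuallyEq (Filter.Eventually.of_forall (fun y => hZ y))
  have hZc : Continuous Z := by
    rw [continuous_iff_continuousAt]
    exact fun x => (hZderiv x).continuousAt
  -- integrability helpers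
  have hexpint : IntegrableOn (fun x : ℝ => Real.exp (-x)) (Ioi 0) := by
    have := exp_neg_integrableOn_Ioi (0:ℝ) (one_pos)
    simpa using this
  have hxexpint : IntegrableOn (fun x : ℝ => Real.exp (-x) * x) (Ioi 0) := by
    have := Real.GammaIntegral_convergent (s := 2) (by norm_num)
    refine this.congr_fun (fun x hx => ?_) measurableSet_Ioi
    norm_num
  -- the derivative pair v = -exp(-x), v' = exp(-x)
  have hec : Continuous fun x : ℝ => Real.exp (-x) := Real.continuous_exp.comp continuous_neg
  have henc : Continuous fun x : ℝ => -Real.exp (-x) := hec.neg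
  have hvderiv : ∀ x : ℝ, HasDerivAt (fun x => -Real.exp (-x)) (Real.exp (-x)) x := by
    intro x
    have h1 : HasDerivAt (fun x : ℝ => Real.exp (-x)) (-Real.exp (-x)) x := by
      simpa [Function.comp_def] using (Real.hasDerivAt_exp (-x)).comp x (hasDerivAt_neg x)
    have h2 := h1.neg; rw [neg_neg] at h2; exact h2
  -- IBP for ζ
  have hζint : IntegrableOn (fun x => ζ x * Real.exp (-x)) (Ioi 0) := by
    apply Integrable.mono' hexpint ((hζc.mul hec).aestronglyMeasurable)
    apply Filter.Eventually.of_forall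
    intro x
    rw [Pi.mul_apply, norm_mul, Real.norm_eq_abs, Real.norm_eq_abs, abs_of_nonneg (hζnn x),
      abs_of_nonneg (Real.exp_pos _).le]
    nlinarith [hζle x, Real.exp_pos (-x)]
  have hηvint : IntegrableOn (fun x => η x * -Real.exp (-x)) (Ioi 0) := by
    have hcs : HasCompactSupport (fun x => η x * -Real.exp (-x)) := by
      apply HasCompactSupport.intro isCompact_Icc
      intro x hx
      have : η x = 0 := by by_contra h; exact hx (hsupp h)
      simp [this]
    exact ((hηc.mul henc).integrable_of_hasCompactSupport hcs).integrableOn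
  have ibp1 : ∫ x in Ioi (0:ℝ), ζ x * Real.exp (-x)
      = ∫ x in Ioi (0:ℝ), η x * Real.exp (-x) := by
    have h_zero : Filter.Tendsto (ζ * fun x => -Real.exp (-x)) (nhdsWithin 0 (Ioi 0)) (nhds 0) := by
      have hc : Filter.Tendsto (ζ * fun x => -Real.exp (-x)) (nhds 0)
          (nhds (ζ 0 * -Real.exp (-0))) :=
        ((hζc.mul henc).tendsto 0)
      have : ζ 0 * -Real.exp (-0) = 0 := by rw [hζ0 0 le_rfl]; ring
      rw [this] at hc
      exact hc.mono_left nhdsWithin_le_nhds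
    have h_infty : Filter.Tendsto (ζ * fun x => -Real.exp (-x)) Filter.atTop (nhds 0) := by
      apply squeeze_zero_norm _ tendsto_exp_neg_atTop_nhds_zero
      intro x
      simp only [Pi.mul_apply, norm_mul, norm_neg, Real.norm_eq_abs,
        abs_of_nonneg (hζnn x), abs_of_nonneg (Real.exp_pos (-x)).le]
      nlinarith [hζle x, Real.exp_pos (-x), hζnn x]
    have := integral_Ioi_mul_deriv_eq_deriv_mul
      (u := ζ) (u' := η) (v := fun x => -Real.exp (-x)) (v' := fun x => Real.exp (-x))
      (fun x _ => hζderiv x) (fun x _ => hvderiv x)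
      hζint hηvint h_zero h_infty
    rw [this]
    simp only [mul_neg, MeasureTheory.integral_neg]
    ring
  -- IBP for Z
  have hZint : IntegrableOn (fun x => Z x * Real.exp (-x)) (Ioi 0) := by
    apply Integrable.mono' hxexpint ((hZc.mul hec).aestronglyMeasurable)
    rw [ae_restrict_iff' measurableSet_Ioi]
    apply Filter.Eventually.of_forall
    intro x hx
    have hx0 : (0:ℝ) < x := hx
    rw [Pi.mul_apply, norm_mul, Real.norm_eq_abs, Real.norm_eq_abs, abs_of_nonneg (hZnn x),
      abs_of_nonneg (Real.exp_pos _).le]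
    nlinarith [hZle x hx0.le, Real.exp_pos (-x)]
  have hζvint : IntegrableOn (fun x => ζ x * -Real.exp (-x)) (Ioi 0) := by
    have : (fun x => ζ x * -Real.exp (-x)) = fun x => -(ζ x * Real.exp (-x)) := by
      funext x; ring
    rw [this]
    exact hζint.neg
  have ibp2 : ∫ x in Ioi (0:ℝ), Z x * Real.exp (-x)
      = ∫ x in Ioi (0:ℝ), ζ x * Real.exp (-x) := by
    have h_zero : Filter.Tendsto (Z * fun x => -Real.exp (-x)) (nhdsWithin 0 (Ioi 0)) (nhds 0) := by
      have hc : Filter.Tendsto (Z * fun x => -Real.exp (-x)) (nhds 0)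
          (nhds (Z 0 * -Real.exp (-0))) :=
        ((hZc.mul henc).tendsto 0)
      have : Z 0 * -Real.exp (-0) = 0 := by rw [hZ0 0 le_rfl]; ring
      rw [this] at hc
      exact hc.mono_left nhdsWithin_le_nhds
    have h_infty : Filter.Tendsto (Z * fun x => -Real.exp (-x)) Filter.atTop (nhds 0) := by
      have hb : Filter.Tendsto (fun x : ℝ => x ^ 1 * Real.exp (-x)) Filter.atTop (nhds 0) :=
        tendsto_pow_mul_exp_neg_atTop_nhds_zero 1
      simp only [pow_one] at hb
      apply squeeze_zero_norm' _ hb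
      filter_upwards [Filter.eventually_ge_atTop (0:ℝ)] with x hx
      simp only [Pi.mul_apply, norm_mul, norm_neg, Real.norm_eq_abs,
        abs_of_nonneg (hZnn x), abs_of_nonneg (Real.exp_pos (-x)).le]
      nlinarith [hZle x hx, Real.exp_pos (-x), hZnn x]
    have := integral_Ioi_mul_deriv_eq_deriv_mul
      (u := Z) (u' := ζ) (v := fun x => -Real.exp (-x)) (v' := fun x => Real.exp (-x))
      (fun x _ => hZderiv x) (fun x _ => hvderiv x)
      hZint hζvint h_zero h_infty
    rw [this]
    simp only [mul_neg, MeasureTheory.integral_neg]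
    ring
  -- restriction of full-line integrals to Ioi 0
  have hrestr : ∀ f : ℝ → ℝ, (∀ y ≤ 0, f y = 0) →
      (∫ y, f y * (K * Real.exp (-y))) = (∫ y in Ioi (0:ℝ), f y * Real.exp (-y)) * K := by
    intro f hf
    have h1 : (∫ y, f y * (K * Real.exp (-y))) = ∫ y, f y * Real.exp (-y) * K := by
      congr 1; funext y; ring
    rw [h1, MeasureTheory.integral_mul_const]
    congr 1
    symm
    apply setIntegral_eq_integral_of_forall_compl_eq_zero
    intro y hy
    rw [hf y (not_lt.mp (fun h => hy h))]
    ring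
  have hrestrη : (∫ y, η y * (K * Real.exp (-y)))
      = (∫ y in Ioi (0:ℝ), η y * Real.exp (-y)) * K := by
    have h1 : (∫ y, η y * (K * Real.exp (-y))) = ∫ y, η y * Real.exp (-y) * K := by
      congr 1; funext y; ring
    rw [h1, MeasureTheory.integral_mul_const]
    congr 1
    symm
    apply setIntegral_eq_integral_of_ae_compl_eq_zero
    have h0 : ∀ᵐ y : ℝ, y ≠ 0 :=
      measure_eq_zero_iff_ae_notMem.mp (measure_singleton (0:ℝ))
    filter_upwards [h0] with y hy hmem
    have hy0 : y < 0 := lt_of_le_of_ne (not_lt.mp (fun h => hmem h)) hy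
    rw [hη0 y hy0]; ring
  refine ⟨?_, ?_, ?_⟩
  · rw [stmt2_subst K hK n hn η, hrestrη]
  · rw [stmt2_subst K hK n hn ζ, hrestr ζ hζ0, ibp1]
  · rw [stmt2_subst K hK n hn Z, hrestr Z hZ0, ibp2, ibp1]
end

section
/- Let (Mⁿ, g) be a complete Riemannian manifold with nonnegative Ricci curvature and p ∈ M. Then lim_{τ→∞} ∫_M (4πτ)^{−n/2} exp(−d(x, p)²/(4τ)) dμ(x) = ν(g), where ν(g) = lim_{r→∞} Vol B(p, r)/(ω_n rⁿ) is the asymptotic volume ratio. -/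
open Real Set Metric MeasureTheory Filter Topology
open scoped ENNReal

/-!
Writing `exp (-d² / 4τ) = ∫_{d / 2√τ}^∞ 2v exp (-v²) dv` and applying Tonelli turns the Gaussian
integral into `2ω (2√τ)ⁿ ∫_0^∞ V (2√τ v) v^{n+1} exp (-v²) dv`, where `V r = μ (B(p, r)) / (ω rⁿ)`
is the volume ratio. Bishop–Gromov monotonicity and `V → 1` at small scales give `0 ≤ V ≤ 1`, so
by dominated convergence `V (2√τ v) → ν` passes under the integral as `τ → ∞`; the normalisations
`ω = π^{n/2} / Γ(n/2 + 1)` and `∫_0^∞ v^{n+1} exp (-v²) dv = Γ(n/2 + 1) / 2` make the constant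
exactly one. If some ball has infinite measure, then `ν = 0` and the Gaussian is not integrable,
so its Bochner integral is `0` as well.
-/

theorem lintegral_lintegral_Ioi_eq_lintegral_measure_lt {α : Type*} [MeasurableSpace α]
    (μ : Measure α) [SFinite μ] {f : α → ℝ} (hf : Measurable f) {h : ℝ → ℝ≥0∞}
    (hh : Measurable h) :
    ∫⁻ x, (∫⁻ v in Ioi (f x), h v) ∂μ = ∫⁻ v, μ {x | f x < v} * h v := by
  have hmeas : Measurable (Function.uncurry fun x v => (Ioi (f x)).indicator h v) := by
    change Measurable ({q : α × ℝ | f q.1 < q.2}.indicator (h ∘ Prod.snd))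
    exact (hh.comp measurable_snd).indicator
      (measurableSet_lt (hf.comp measurable_fst) measurable_snd)
  calc ∫⁻ x, (∫⁻ v in Ioi (f x), h v) ∂μ
      = ∫⁻ x, (∫⁻ v, (Ioi (f x)).indicator h v) ∂μ := by
        simp only [lintegral_indicator measurableSet_Ioi]
    _ = ∫⁻ v, ∫⁻ x, {x | f x < v}.indicator (fun _ => h v) x ∂μ :=
        lintegral_lintegral_swap hmeas.aemeasurable
    _ = ∫⁻ v, μ {x | f x < v} * h v := by
        simp only [lintegral_indicator_const (measurableSet_lt hf measurable_const), mul_comm]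

theorem lintegral_Ioi_ofReal_two_mul_mul_exp_neg_sq {s : ℝ} (hs : 0 ≤ s) :
    ∫⁻ v in Ioi s, ENNReal.ofReal (2 * v * exp (-v ^ 2)) = ENNReal.ofReal (exp (-s ^ 2)) := by
  have hderiv : ∀ v ∈ Ici s, HasDerivAt (fun v => -exp (-v ^ 2)) (2 * v * exp (-v ^ 2)) v := by
    intro v _
    refine (hasDerivAt_pow 2 v).fun_neg.exp.fun_neg.congr_deriv ?_
    push_cast
    ring
  have hnonneg : ∀ v ∈ Ioi s, 0 ≤ 2 * v * exp (-v ^ 2) := fun v hv => by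
    have : 0 ≤ v := hs.trans (le_of_lt hv)
    positivity
  have hlim : Tendsto (fun v => -exp (-v ^ 2)) atTop (𝓝 0) := by
    simpa using (tendsto_exp_atBot.comp
      (tendsto_neg_atTop_atBot.comp (tendsto_pow_atTop two_ne_zero))).neg
  rw [← ofReal_integral_eq_lintegral_ofReal
      (integrableOn_Ioi_deriv_of_nonneg' hderiv hnonneg hlim)
      ((ae_restrict_mem measurableSet_Ioi).mono hnonneg),
    integral_Ioi_of_hasDerivAt_of_nonneg' hderiv hnonneg hlim, zero_sub, neg_neg]

theorem sigmaFinite_of_measure_ball_ne_top {M : Type*} [PseudoMetricSpace M] [MeasurableSpace M]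
    {μ : Measure M} {p : M} (hfin : ∀ r, μ (ball p r) ≠ ∞) : SigmaFinite μ :=
  ⟨⟨⟨fun n : ℕ => ball p n, fun _ => trivial, fun n => (hfin n).lt_top, iUnion_ball_nat p⟩⟩⟩

theorem pow_mul_exp_neg_sq_eq_rpow (k : ℕ) :
    (fun v : ℝ => v ^ k * exp (-v ^ 2)) = fun v => v ^ (k : ℝ) * exp (-v ^ (2 : ℝ)) := by
  funext v
  rw [rpow_natCast, rpow_two]

theorem integrableOn_pow_mul_exp_neg_sq (k : ℕ) :
    IntegrableOn (fun v : ℝ => v ^ k * exp (-v ^ 2)) (Ioi 0) := by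
  rw [pow_mul_exp_neg_sq_eq_rpow]
  exact integrableOn_rpow_mul_exp_neg_rpow (by linarith [k.cast_nonneg (α := ℝ)]) two_pos

theorem integral_pow_mul_exp_neg_sq (k : ℕ) :
    ∫ v in Ioi 0, v ^ k * exp (-v ^ 2) = Gamma ((k + 1) / 2) / 2 := by
  rw [pow_mul_exp_neg_sq_eq_rpow,
    integral_rpow_mul_exp_neg_rpow two_pos (by linarith [k.cast_nonneg (α := ℝ)])]
  ring

theorem AntitoneOn.le_of_tendsto_nhdsGT {α β : Type*} [LinearOrder α] [TopologicalSpace α]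
    [OrderTopology α] [DenselyOrdered α] [Preorder β] [TopologicalSpace β]
    [ClosedIciTopology β] {f : α → β} {a u : α} {l : β} (hf : AntitoneOn f (Ioi a))
    (hl : Tendsto f (𝓝[>] a) (𝓝 l)) (hu : a < u) : f u ≤ l :=
  have : (𝓝[>] a).NeBot := nhdsGT_neBot_of_exists_gt ⟨u, hu⟩
  ge_of_tendsto hl <| by
    filter_upwards [Ioc_mem_nhdsGT hu] with s hs
    exact hf hs.1 hu hs.2

theorem tendsto_setIntegral_comp_mul_Ioi {V w : ℝ → ℝ} {ν C : ℝ} (hV : Measurable V)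
    (hVC : ∀ u ∈ Ioi 0, ‖V u‖ ≤ C) (hVν : Tendsto V atTop (𝓝 ν))
    (hw : IntegrableOn w (Ioi 0)) :
    Tendsto (fun c => ∫ v in Ioi 0, V (c * v) * w v) atTop (𝓝 (ν * ∫ v in Ioi 0, w v)) := by
  rw [← integral_const_mul]
  refine tendsto_integral_filter_of_dominated_convergence (fun v => C * ‖w v‖)
    (Eventually.of_forall fun c =>
      ((hV.comp (measurable_const_mul c)).aestronglyMeasurable).mul hw.aestronglyMeasurable)
    ?_ (hw.norm.const_mul C) ?_
  · filter_upwards [eventually_gt_atTop 0] with c hc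
    filter_upwards [ae_restrict_mem measurableSet_Ioi] with v hv
    rw [norm_mul]
    exact mul_le_mul_of_nonneg_right (hVC _ (mul_pos hc hv)) (norm_nonneg _)
  · filter_upwards [ae_restrict_mem measurableSet_Ioi] with v hv
    exact (hVν.comp (tendsto_id.atTop_mul_const hv)).mul_const _

theorem not_integrable_of_le_of_measure_eq_top {α : Type*} [MeasurableSpace α] {μ : Measure α}
    {f : α → ℝ} {s : Set α} {ε : ℝ} (hε : 0 < ε) (hs : μ s = ∞) (hf : ∀ x ∈ s, ε ≤ f x) :
    ¬Integrable f μ := fun hfi =>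
  (hfi.measure_norm_ge_lt_top hε).ne <|
    eq_top_mono (measure_mono fun x hx => (hf x hx).trans (le_abs_self _)) hs

theorem mul_rpow_neg_div_two_mul_two_mul_sqrt_pow {a τ : ℝ} (ha : 0 ≤ a) (hτ : 0 < τ) (n : ℕ) :
    (4 * a * τ) ^ (-(n : ℝ) / 2) * (2 * √τ) ^ n = (a ^ ((n : ℝ) / 2))⁻¹ := by
  have h4τ : 0 < 4 * τ := by positivity
  have hsqrt : (2 * √τ) ^ n = (4 * τ) ^ ((n : ℝ) / 2) := by
    rw [show 2 * √τ = √(4 * τ) by rw [sqrt_mul' _ hτ.le, show (4 : ℝ) = 2 ^ 2 by norm_num,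
      sqrt_sq zero_le_two], sqrt_eq_rpow, ← rpow_natCast, ← rpow_mul h4τ.le]
    ring_nf
  rw [hsqrt, show 4 * a * τ = a * (4 * τ) by ring, mul_rpow ha h4τ.le, neg_div, rpow_neg ha,
    rpow_neg h4τ.le, mul_assoc, inv_mul_cancel₀ (rpow_pos_of_pos h4τ _).ne', mul_one]

section Ball

variable {M : Type*} [PseudoMetricSpace M] [MeasurableSpace M] (μ : Measure M) (p : M)

noncomputable def ballVolumeRatio (ω : ℝ) (n : ℕ) (r : ℝ) : ℝ :=
  (μ (ball p r)).toReal / (ω * r ^ n)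

theorem lintegral_ofReal_exp_neg_dist_div_sq [OpensMeasurableSpace M] [SFinite μ] {c : ℝ}
    (hc : 0 < c) :
    ∫⁻ x, ENNReal.ofReal (exp (-(dist x p / c) ^ 2)) ∂μ
      = ∫⁻ v in Ioi 0, μ (ball p (c * v)) * ENNReal.ofReal (2 * v * exp (-v ^ 2)) := by
  have hball : ∀ v, {x | dist x p / c < v} = ball p (c * v) := fun v => by
    ext x
    change dist x p / c < v ↔ dist x p < c * v
    rw [div_lt_iff₀ hc, mul_comm]
  calc ∫⁻ x, ENNReal.ofReal (exp (-(dist x p / c) ^ 2)) ∂μ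
      = ∫⁻ x, (∫⁻ v in Ioi (dist x p / c), ENNReal.ofReal (2 * v * exp (-v ^ 2))) ∂μ :=
        lintegral_congr fun x =>
          (lintegral_Ioi_ofReal_two_mul_mul_exp_neg_sq (by positivity)).symm
    _ = ∫⁻ v, μ (ball p (c * v)) * ENNReal.ofReal (2 * v * exp (-v ^ 2)) := by
        rw [lintegral_lintegral_Ioi_eq_lintegral_measure_lt μ (f := fun x => dist x p / c)
          ((continuous_id.dist continuous_const).measurable.div_const c) (by fun_prop)]
        simp only [hball]
    _ = ∫⁻ v in Ioi 0, μ (ball p (c * v)) * ENNReal.ofReal (2 * v * exp (-v ^ 2)) := by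
        refine (setLIntegral_eq_of_support_subset fun v hv => ?_).symm
        by_contra hv0
        have : c * v ≤ 0 := mul_nonpos_of_nonneg_of_nonpos hc.le (not_lt.1 hv0)
        exact hv (show μ (ball p (c * v)) * _ = 0 by
          rw [ball_eq_empty.2 this, measure_empty, zero_mul])

theorem integral_exp_neg_dist_div_sq [OpensMeasurableSpace M] (hfin : ∀ r, μ (ball p r) ≠ ∞)
    {c : ℝ} (hc : 0 < c) :
    ∫ x, exp (-(dist x p / c) ^ 2) ∂μ
      = ∫ v in Ioi 0, (μ (ball p (c * v))).toReal * (2 * v * exp (-v ^ 2)) := by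
  have := sigmaFinite_of_measure_ball_ne_top hfin
  have hmono : Monotone fun v => (μ (ball p (c * v))).toReal := fun a b hab =>
    ENNReal.toReal_mono (hfin _) (measure_mono (ball_subset_ball (by gcongr)))
  have hnonneg : 0 ≤ᵐ[volume.restrict (Ioi 0)]
      fun v => (μ (ball p (c * v))).toReal * (2 * v * exp (-v ^ 2)) := by
    filter_upwards [ae_restrict_mem measurableSet_Ioi] with v (hv : 0 < v)
    positivity
  rw [integral_eq_lintegral_of_nonneg_ae (ae_of_all _ fun x => (exp_pos _).le)
      (by fun_prop),
    integral_eq_lintegral_of_nonneg_ae hnonneg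
      ((hmono.measurable.mul (by fun_prop)).aestronglyMeasurable),
    lintegral_ofReal_exp_neg_dist_div_sq μ p hc]
  congr 1
  refine setLIntegral_congr_fun measurableSet_Ioi fun v _ => ?_
  rw [ENNReal.ofReal_mul ENNReal.toReal_nonneg, ENNReal.ofReal_toReal (hfin _)]

theorem setIntegral_measure_ball_eq_ballVolumeRatio {ω : ℝ} (hω : ω ≠ 0) {c : ℝ} (hc : 0 < c)
    (n : ℕ) :
    ∫ v in Ioi 0, (μ (ball p (c * v))).toReal * (2 * v * exp (-v ^ 2))
      = 2 * ω * c ^ n *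
          ∫ v in Ioi 0, ballVolumeRatio μ p ω n (c * v) * (v ^ (n + 1) * exp (-v ^ 2)) := by
  rw [← integral_const_mul]
  refine setIntegral_congr_fun measurableSet_Ioi fun v (hv : 0 < v) => ?_
  have : ω * (c * v) ^ n ≠ 0 := by positivity
  simp only [ballVolumeRatio]
  field_simp
  ring

theorem tendsto_integral_gaussian_dist_of_measure_ball_ne_top [OpensMeasurableSpace M]
    (hfin : ∀ r, μ (ball p r) ≠ ∞) {n : ℕ} {ω : ℝ}
    (hω : ω = π ^ ((n : ℝ) / 2) / Gamma ((n : ℝ) / 2 + 1))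
    (hle : ∀ u, 0 < u → ballVolumeRatio μ p ω n u ≤ 1) {ν : ℝ}
    (hν : Tendsto (ballVolumeRatio μ p ω n) atTop (𝓝 ν)) :
    Tendsto (fun τ : ℝ => ∫ x, (4 * π * τ) ^ (-(n : ℝ) / 2) * exp (-(dist x p) ^ 2 / (4 * τ)) ∂μ)
      atTop (𝓝 ν) := by
  set V := ballVolumeRatio μ p ω n
  have hΓ : 0 < Gamma ((n : ℝ) / 2 + 1) := Gamma_pos_of_pos (by positivity)
  have hω0 : 0 < ω := by rw [hω]; positivity
  have hV : Measurable V := by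
    refine Measurable.div (Monotone.measurable fun a b hab => ?_) (by fun_prop)
    exact ENNReal.toReal_mono (hfin b) (measure_mono (ball_subset_ball hab))
  have hVC : ∀ u ∈ Ioi (0 : ℝ), ‖V u‖ ≤ 1 := fun u (hu : 0 < u) => by
    change ‖(μ (ball p u)).toReal / (ω * u ^ n)‖ ≤ 1
    rw [norm_of_nonneg (div_nonneg ENNReal.toReal_nonneg (by positivity))]
    exact hle u hu
  have hlim :=
    tendsto_setIntegral_comp_mul_Ioi hV hVC hν (integrableOn_pow_mul_exp_neg_sq (n + 1))
  rw [integral_pow_mul_exp_neg_sq, show ((n + 1 : ℕ) + 1 : ℝ) / 2 = n / 2 + 1 by push_cast; ring]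
    at hlim
  have hsqrt : Tendsto (fun τ : ℝ => 2 * √τ) atTop atTop :=
    tendsto_sqrt_atTop.const_mul_atTop two_pos
  have hrescale : ∀ τ : ℝ, 0 < τ →
      ∫ x, (4 * π * τ) ^ (-(n : ℝ) / 2) * exp (-(dist x p) ^ 2 / (4 * τ)) ∂μ
        = 2 / Gamma ((n : ℝ) / 2 + 1) *
            ∫ v in Ioi 0, V (2 * √τ * v) * (v ^ (n + 1) * exp (-v ^ 2)) := by
    intro τ hτ
    have hc : 0 < 2 * √τ := by positivity
    have hsq : ∀ d : ℝ, -d ^ 2 / (4 * τ) = -(d / (2 * √τ)) ^ 2 := fun d => by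
      rw [div_pow, mul_pow, sq_sqrt hτ.le]
      ring
    have hconst : (4 * π * τ) ^ (-(n : ℝ) / 2) * (2 * ω * (2 * √τ) ^ n)
        = 2 / Gamma ((n : ℝ) / 2 + 1) := by
      rw [mul_left_comm, mul_rpow_neg_div_two_mul_two_mul_sqrt_pow pi_pos.le hτ, hω]
      field_simp
    simp only [hsq]
    rw [integral_const_mul, integral_exp_neg_dist_div_sq μ p hfin hc,
      setIntegral_measure_ball_eq_ballVolumeRatio μ p hω0.ne' hc n, ← mul_assoc, hconst]
  have h := ((hlim.comp hsqrt).const_mul (2 / Gamma ((n : ℝ) / 2 + 1))).congr' <| by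
    filter_upwards [eventually_gt_atTop 0] with τ hτ
    exact (hrescale τ hτ).symm
  rwa [show 2 / Gamma ((n : ℝ) / 2 + 1) * (ν * (Gamma ((n : ℝ) / 2 + 1) / 2)) = ν by
    field_simp] at h

theorem tendsto_integral_gaussian_dist_of_measure_ball_eq_top {r : ℝ} (hr : μ (ball p r) = ∞)
    {n : ℕ} {ω ν : ℝ} (hν : Tendsto (ballVolumeRatio μ p ω n) atTop (𝓝 ν)) :
    Tendsto (fun τ : ℝ => ∫ x, (4 * π * τ) ^ (-(n : ℝ) / 2) * exp (-(dist x p) ^ 2 / (4 * τ)) ∂μ)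
      atTop (𝓝 ν) := by
  have hν0 : ν = 0 := by
    refine tendsto_nhds_unique hν (tendsto_const_nhds.congr' ?_)
    filter_upwards [eventually_ge_atTop r] with s hs
    rw [ballVolumeRatio, eq_top_mono (measure_mono (ball_subset_ball hs)) hr,
      ENNReal.toReal_top, zero_div]
  subst hν0
  refine tendsto_const_nhds.congr' ?_
  filter_upwards [eventually_gt_atTop 0] with τ hτ
  refine (integral_undef <| not_integrable_of_le_of_measure_eq_top
    (ε := (4 * π * τ) ^ (-(n : ℝ) / 2) * exp (-r ^ 2 / (4 * τ))) (by positivity) hr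
    fun x hx => ?_).symm
  have hxr : dist x p ≤ r := (mem_ball.1 hx).le
  have : 0 ≤ dist x p := dist_nonneg
  gcongr

end Ball

theorem stmt8_general {M : Type*} [MetricSpace M] [MeasurableSpace M] [BorelSpace M]
    (n : ℕ) (μ : Measure M)
    (ω : ℝ) (hω : ω = π ^ ((n:ℝ)/2) / Real.Gamma ((n:ℝ)/2 + 1))
    (hRicciNonnegBG : ∀ p : M,
      AntitoneOn (fun r => (μ (ball p r)).toReal / (ω * r^n)) (Ioi 0))
    (hsmallScale : ∀ p : M,
      Tendsto (fun r => (μ (ball p r)).toReal / (ω * r^n)) (nhdsWithin 0 (Ioi 0)) (nhds 1))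
    (p : M) (ν : ℝ)
    (hν : Tendsto (fun r => (μ (ball p r)).toReal / (ω * r^n)) atTop (nhds ν)) :
    Tendsto (fun τ : ℝ => ∫ x, (4 * π * τ) ^ (-(n:ℝ)/2) * Real.exp (-(dist x p)^2 / (4 * τ)) ∂μ)
      atTop (nhds ν) := by
  rcases em (∃ r, μ (ball p r) = ∞) with ⟨r, hr⟩ | hfin
  · exact tendsto_integral_gaussian_dist_of_measure_ball_eq_top μ p hr hν
  · exact tendsto_integral_gaussian_dist_of_measure_ball_ne_top μ p (fun r hr => hfin ⟨r, hr⟩)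
      hω (fun u hu => (hRicciNonnegBG p).le_of_tendsto_nhdsGT (hsmallScale p) hu) hν

/-- Static analogue of the main theorem: on a complete manifold of nonnegative Ricci curvature
(encoded via the Bishop–Gromov volume-comparison package, since Mathlib has no Ricci tensor),
`lim_{τ→∞} ∫_M (4πτ)^{−n/2} exp(−d(x,p)²/(4τ)) dμ(x) = ν(g)`, the asymptotic volume ratio. -/
theorem stmt8 {M : Type*} [MetricSpace M] [CompleteSpace M] [MeasurableSpace M] [BorelSpace M]
    (n : ℕ) (hn : 1 ≤ n) (μ : Measure M)
    (ω : ℝ) (hω : ω = π ^ ((n:ℝ)/2) / Real.Gamma ((n:ℝ)/2 + 1))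
    (hRicciNonnegBG : ∀ p : M,
      AntitoneOn (fun r => (μ (ball p r)).toReal / (ω * r^n)) (Ioi 0))
    (hsmallScale : ∀ p : M,
      Tendsto (fun r => (μ (ball p r)).toReal / (ω * r^n)) (nhdsWithin 0 (Ioi 0)) (nhds 1))
    (p : M) (ν : ℝ)
    (hν : Tendsto (fun r => (μ (ball p r)).toReal / (ω * r^n)) atTop (nhds ν)) :
    Tendsto (fun τ : ℝ => ∫ x, (4 * π * τ) ^ (-(n:ℝ)/2) * Real.exp (-(dist x p)^2 / (4 * τ)) ∂μ)
      atTop (nhds ν) :=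
  stmt8_general n μ ω hω hRicciNonnegBG hsmallScale p ν hν
end

section
/- Let (Mⁿ, g) be a complete Riemannian manifold with nonnegative Ricci curvature, viewed as a static super Ricci flow (so the reduced distance from (p,0) is ℓ(x, τ) = d(x,p)²/(4τ), K(x,τ) = (4πτ)^{−n/2} e^{−ℓ(x,τ)}, and H ≡ 0). Then for all r > 0, I_{(p,0)}(r) = (1/rⁿ) ∫₀^{r²/(4π)} (n/(2τ)) Vol B(p, √(2nτ log(r²/(4πτ)))) dτ, and consequently lim_{r→∞} I_{(p,0)}(r) = ν(g), the asymptotic volume ratio. -/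
open Real Set Metric MeasureTheory Filter

/-!
Because `ℓ = d(x,p)²/(4τ)`, every time slice of the pseudo heat ball `E_r` is a metric ball about
`p`, which gives the first formula. Substituting `τ = (r²/4π) u` turns `I(r)` into
`∫₀¹ n/(2u) · Vol B(p, r c(u)) / rⁿ du` with `c(u) = √(n u (−log u) / 2π)`. Bishop–Gromov bounds
`Vol B(p,t) ≤ ω_n tⁿ`, so dominated convergence gives `I(r) → ν · ∫₀¹ n/(2u) · ω_n c(u)ⁿ du`, and
this Gamma integral equals `1`.
-/

/-- The local quantity `I_{(p,0)}(r)` of a nonnegatively-Ricci-curved manifold viewed as a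
static super Ricci flow: since `ℓ(x,τ) = d(x,p)²/(4τ)`, `K(x,τ) = (4πτ)^{−n/2} e^{−ℓ}`, `H ≡ 0`,
and `|∇log K|² − ∂_τ log K = n/(2τ)`, we have
`I(r) = (1/rⁿ) ∫_{E_r} n/(2τ) dμ dτ`, with time-slices of the pseudo heat ball being
metric balls. -/
noncomputable def staticI {M : Type*} [MetricSpace M] [MeasurableSpace M]
    (n : ℕ) (μ : Measure M) (p : M) (r : ℝ) : ℝ :=
  (1 / r^n) * ∫ τ in Ioi (0:ℝ), ((n:ℝ) / (2 * τ)) *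
    (μ {x : M | r ^ (-(n:ℝ)) < (4 * π * τ) ^ (-(n:ℝ)/2)
        * Real.exp (-(dist x p)^2 / (4 * τ))}).toReal

open Topology

theorem image_exp_neg_Ioi_zero : (fun t : ℝ => exp (-t)) '' Ioi 0 = Ioo 0 1 := by
  rw [show (fun t : ℝ => exp (-t)) = exp ∘ Neg.neg from rfl, image_comp, image_neg_Ioi,
    neg_zero, image_exp_Iio, exp_zero]

theorem integral_rpow_mul_neg_log_rpow {a b : ℝ} (ha : 0 < a) (hb : 0 < b) :
    ∫ u in Ioo (0:ℝ) 1, u ^ (a - 1) * (-log u) ^ (b - 1) = (1 / a) ^ b * Gamma b := by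
  have hderiv : ∀ t ∈ Ioi (0:ℝ),
      HasDerivWithinAt (fun t => exp (-t)) (-exp (-t)) (Ioi 0) t := fun t _ => by
    simpa using ((hasDerivAt_neg t).exp).hasDerivWithinAt
  have hinj : InjOn (fun t : ℝ => exp (-t)) (Ioi 0) := fun s _ t _ h => by
    simpa using exp_injective h
  rw [← image_exp_neg_Ioi_zero,
    integral_image_eq_integral_abs_deriv_smul measurableSet_Ioi hderiv hinj,
    ← integral_rpow_mul_exp_neg_mul_Ioi hb ha]
  refine setIntegral_congr_fun measurableSet_Ioi fun t _ => ?_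
  rw [smul_eq_mul, abs_neg, abs_of_pos (exp_pos _), log_exp, neg_neg, ← exp_mul, ← mul_assoc,
    ← exp_add, mul_comm]
  ring_nf

theorem rpow_neg_lt_heatKernel_iff {n : ℕ} {r τ d : ℝ} (hr : 0 < r) (hτ : 0 < τ) :
    r ^ (-(n:ℝ)) < (4 * π * τ) ^ (-(n:ℝ) / 2) * exp (-d ^ 2 / (4 * τ)) ↔
      d ^ 2 < 2 * n * τ * log (r ^ 2 / (4 * π * τ)) := by
  have h4πτ : 0 < 4 * π * τ := by positivity
  rw [rpow_def_of_pos hr, rpow_def_of_pos h4πτ, ← exp_add, exp_lt_exp,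
    log_div (by positivity) h4πτ.ne', log_pow,
    show 2 * n * τ * ((2 : ℕ) * log r - log (4 * π * τ))
      = (n * log r - n / 2 * log (4 * π * τ)) * (4 * τ) by push_cast; ring,
    ← div_lt_iff₀ (by positivity)]
  constructor <;> intro h <;> linarith [neg_div (4 * τ) (d ^ 2)]

theorem setOf_rpow_neg_lt_heatKernel_eq_ball {M : Type*} [PseudoMetricSpace M] (n : ℕ) (p : M)
    {r τ : ℝ} (hr : 0 < r) (hτ : 0 < τ) :
    {x : M | r ^ (-(n:ℝ)) < (4 * π * τ) ^ (-(n:ℝ) / 2) * exp (-dist x p ^ 2 / (4 * τ))} =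
      ball p (√(2 * n * τ * log (r ^ 2 / (4 * π * τ)))) := by
  ext x
  rw [mem_ofPred_eq, rpow_neg_lt_heatKernel_iff hr hτ, mem_ball, lt_sqrt dist_nonneg]

theorem staticI_eq_integral_ball {M : Type*} [MetricSpace M] [MeasurableSpace M]
    (n : ℕ) (μ : Measure M) (p : M) {r : ℝ} (hr : 0 < r) :
    staticI n μ p r = (1 / r ^ n) * ∫ τ in Ioo 0 (r ^ 2 / (4 * π)), n / (2 * τ) *
      (μ (ball p (√(2 * n * τ * log (r ^ 2 / (4 * π * τ)))))).toReal := by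
  rw [staticI, setIntegral_eq_of_subset_of_forall_sdiff_eq_zero measurableSet_Ioi
    Ioo_subset_Ioi_self fun τ hτ => ?_]
  · refine congrArg _ (setIntegral_congr_fun measurableSet_Ioo fun τ hτ => ?_)
    rw [setOf_rpow_neg_lt_heatKernel_eq_ball n p hr hτ.1]
  obtain ⟨hτ : 0 < τ, hτa⟩ := hτ
  -- past `τ = r²/(4π)` the logarithm is nonpositive, so the radius is `0`
  have hlog : log (r ^ 2 / (4 * π * τ)) ≤ 0 := by
    refine log_nonpos (by positivity) ((div_le_one (by positivity)).mpr ?_)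
    have : r ^ 2 / (4 * π) ≤ τ := not_lt.mp fun h => hτa ⟨hτ, h⟩
    rwa [div_le_iff₀ (by positivity), mul_comm] at this
  rw [setOf_rpow_neg_lt_heatKernel_eq_ball n p hr hτ,
    sqrt_eq_zero'.mpr (mul_nonpos_of_nonneg_of_nonpos (by positivity) hlog)]
  simp

theorem integral_Ioo_zero_eq_mul_integral_Ioo_zero_one {a : ℝ} (ha : 0 < a) (f : ℝ → ℝ) :
    ∫ τ in Ioo 0 a, f τ = a * ∫ u in Ioo 0 1, f (a * u) := by
  rw [← integral_Ioc_eq_integral_Ioo, ← integral_Ioc_eq_integral_Ioo,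
    ← intervalIntegral.integral_of_le ha.le, ← intervalIntegral.integral_of_le zero_le_one,
    intervalIntegral.integral_comp_mul_left f ha.ne', mul_zero, mul_one, smul_eq_mul,
    mul_inv_cancel_left₀ ha.ne']

/-- At time `τ = (r² / 4π) u` the slice of the pseudo heat ball is the ball of radius
`r * heatBallProfile n u`. -/
noncomputable def heatBallProfile (n : ℕ) (u : ℝ) : ℝ := √(n / (2 * π) * (u * -log u))

theorem heatBallRadius_eq_mul_heatBallProfile (n : ℕ) {r u : ℝ} (hr : 0 < r) (hu : 0 < u) :
    √(2 * n * (r ^ 2 / (4 * π) * u) * log (r ^ 2 / (4 * π * (r ^ 2 / (4 * π) * u)))) =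
      r * heatBallProfile n u := by
  have hradicand : 2 * n * (r ^ 2 / (4 * π) * u) * log (r ^ 2 / (4 * π * (r ^ 2 / (4 * π) * u)))
      = r ^ 2 * (n / (2 * π) * (u * -log u)) := by
    rw [show r ^ 2 / (4 * π * (r ^ 2 / (4 * π) * u)) = u⁻¹ by field_simp, log_inv]
    field_simp
    ring
  rw [hradicand, sqrt_mul (sq_nonneg r), sqrt_sq hr.le, heatBallProfile]

theorem staticI_eq_integral_heatBallProfile {M : Type*} [MetricSpace M] [MeasurableSpace M]
    (n : ℕ) (μ : Measure M) (p : M) {r : ℝ} (hr : 0 < r) :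
    staticI n μ p r = ∫ u in Ioo 0 1,
      n / (2 * u) * (μ (ball p (r * heatBallProfile n u))).toReal / r ^ n := by
  have ha : 0 < r ^ 2 / (4 * π) := by positivity
  rw [staticI_eq_integral_ball n μ p hr, integral_Ioo_zero_eq_mul_integral_Ioo_zero_one ha,
    ← integral_const_mul, ← integral_const_mul]
  refine setIntegral_congr_fun measurableSet_Ioo fun u hu => ?_
  rw [heatBallRadius_eq_mul_heatBallProfile n hr hu.1]
  field_simp

theorem heatBallProfile_pos {n : ℕ} (hn : 0 < n) {u : ℝ} (hu : u ∈ Ioo 0 1) :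
    0 < heatBallProfile n u :=
  sqrt_pos.mpr <| mul_pos (by positivity) (mul_pos hu.1 (neg_pos.mpr (log_neg hu.1 hu.2)))

/-- On Euclidean space, where `Vol B(t) = ω_n tⁿ`, this is the statement `I ≡ 1`. -/
theorem integral_heatBallProfile_eq_one {n : ℕ} (hn : 0 < n) :
    ∫ u in Ioo 0 1, n / (2 * u) *
      (π ^ ((n:ℝ) / 2) / Gamma ((n:ℝ) / 2 + 1) * heatBallProfile n u ^ n) = 1 := by
  set s : ℝ := n / 2 with hs
  have hs0 : 0 < s := div_pos (by exact_mod_cast hn) two_pos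
  have hintegrand : ∀ u ∈ Ioo (0:ℝ) 1,
      n / (2 * u) * (π ^ s / Gamma (s + 1) * heatBallProfile n u ^ n) =
        π ^ s / Gamma (s + 1) * (n / (2 * π)) ^ s * s * (u ^ (s - 1) * (-log u) ^ (s + 1 - 1)) := by
    rintro u ⟨hu0, hu1⟩
    have hlog : 0 ≤ -log u := neg_nonneg.mpr (log_nonpos hu0.le hu1.le)
    rw [heatBallProfile, sqrt_eq_rpow, ← rpow_natCast, ← rpow_mul (by positivity),
      show 1 / 2 * (n : ℝ) = s by rw [hs]; ring, mul_rpow (by positivity) (by positivity),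
      mul_rpow hu0.le hlog, rpow_sub_one hu0.ne', add_sub_cancel_right]
    field_simp
    ring
  rw [setIntegral_congr_fun measurableSet_Ioo hintegrand, integral_const_mul,
    integral_rpow_mul_neg_log_rpow hs0 (by positivity), show n / (2 * π) = s / π by rw [hs]; ring,
    div_rpow hs0.le pi_pos.le, one_div, inv_rpow hs0.le, rpow_add_one hs0.ne']
  have : 0 < s ^ s := by positivity
  field_simp

theorem AntitoneOn.le_of_tendsto_nhdsGT_s9 {f : ℝ → ℝ} {a L t : ℝ} (hf : AntitoneOn f (Ioi a))
    (hL : Tendsto f (𝓝[>] a) (𝓝 L)) (ht : a < t) : f t ≤ L :=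
  ge_of_tendsto hL <| mem_of_superset (Ioo_mem_nhdsGT ht) fun _ hx => hf hx.1 ht hx.2.le

theorem tendsto_integral_div_pow_of_tendsto {α : Type*} [MeasurableSpace α] {ρ : Measure α}
    {V : ℝ → ℝ} {w c : α → ℝ} {n : ℕ} {ω ν : ℝ} (hω : 0 < ω) (hVm : Measurable V)
    (hV0 : ∀ t, 0 ≤ V t) (hVle : ∀ t, 0 < t → V t ≤ ω * t ^ n)
    (hν : Tendsto (fun t => V t / (ω * t ^ n)) atTop (𝓝 ν))
    (hwm : Measurable w) (hcm : Measurable c) (hwc : ∀ᵐ x ∂ρ, 0 ≤ w x ∧ 0 < c x)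
    (hint : Integrable (fun x => w x * (ω * c x ^ n)) ρ) :
    Tendsto (fun r => ∫ x, w x * V (r * c x) / r ^ n ∂ρ) atTop
      (𝓝 (ν * ∫ x, w x * (ω * c x ^ n) ∂ρ)) := by
  rw [← integral_const_mul]
  refine tendsto_integral_filter_of_dominated_convergence _
    (.of_forall fun r => ((hwm.mul (hVm.comp (measurable_const.mul hcm))).div_const _)
      |>.aestronglyMeasurable) ?_ hint ?_
  · filter_upwards [eventually_gt_atTop 0] with r hr
    filter_upwards [hwc] with x ⟨hw, hc⟩
    have hrc := mul_pos hr hc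
    rw [norm_of_nonneg (by have := hV0 (r * c x); positivity)]
    calc w x * V (r * c x) / r ^ n ≤ w x * (ω * (r * c x) ^ n) / r ^ n := by
          gcongr; exact hVle _ hrc
      _ = w x * (ω * c x ^ n) := by rw [mul_pow]; field_simp
  · filter_upwards [hwc] with x ⟨hw, hc⟩
    refine ((hν.comp (tendsto_id.atTop_mul_const hc)).mul_const (w x * (ω * c x ^ n))).congr' ?_
    filter_upwards [eventually_gt_atTop 0] with r hr
    simp only [Function.comp_apply, id_eq]
    rw [mul_pow]
    field_simp

theorem stmt9_general {M : Type*} [MetricSpace M] [MeasurableSpace M]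
    (n : ℕ) (hn : 1 ≤ n) (μ : Measure M)
    (ω : ℝ) (hω : ω = π ^ ((n:ℝ)/2) / Real.Gamma ((n:ℝ)/2 + 1))
    (hRicciNonnegBG : ∀ p : M,
      AntitoneOn (fun r => (μ (ball p r)).toReal / (ω * r^n)) (Ioi 0))
    (hsmallScale : ∀ p : M,
      Tendsto (fun r => (μ (ball p r)).toReal / (ω * r^n)) (nhdsWithin 0 (Ioi 0)) (nhds 1))
    (p : M) (ν : ℝ)
    (hν : Tendsto (fun r => (μ (ball p r)).toReal / (ω * r^n)) atTop (nhds ν)) :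
    (∀ r : ℝ, 0 < r → staticI n μ p r
        = (1 / r^n) * ∫ τ in Ioo (0:ℝ) (r^2 / (4 * π)), ((n:ℝ) / (2 * τ)) *
            (μ (ball p (Real.sqrt (2 * n * τ * Real.log (r^2 / (4 * π * τ)))))).toReal)
    ∧ Tendsto (staticI n μ p) atTop (nhds ν) := by
  refine ⟨fun r hr => staticI_eq_integral_ball n μ p hr, ?_⟩
  have hω0 : 0 < ω := by rw [hω]; positivity
  -- Bishop–Gromov: the volume ratio is at most its small-scale limit `1`
  have hle : ∀ t, 0 < t → (μ (ball p t)).toReal ≤ ω * t ^ n := fun t ht => by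
    have := (hRicciNonnegBG p).le_of_tendsto_nhdsGT_s9 (hsmallScale p) ht
    rwa [div_le_one (by positivity)] at this
  have hlim := tendsto_integral_div_pow_of_tendsto (ρ := volume.restrict (Ioo 0 1))
    (w := fun u => n / (2 * u)) (c := heatBallProfile n) hω0
    ((Monotone.measurable fun _ _ h => measure_mono (ball_subset_ball h)).ennreal_toReal)
    (fun _ => ENNReal.toReal_nonneg) hle hν (by fun_prop) (by unfold heatBallProfile; fun_prop)
    ((ae_restrict_iff' measurableSet_Ioo).mpr (.of_forall fun u hu =>
      ⟨by have := hu.1; positivity, heatBallProfile_pos hn hu⟩))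
    (.of_integral_ne_zero (by rw [hω, integral_heatBallProfile_eq_one hn]; exact one_ne_zero))
  rw [hω, integral_heatBallProfile_eq_one hn, mul_one] at hlim
  refine hlim.congr' ?_
  filter_upwards [eventually_gt_atTop 0] with r hr
  exact (staticI_eq_integral_heatBallProfile n μ p hr).symm

/-- Proposition 3.2: on a complete manifold of nonnegative Ricci curvature (encoded via the
Bishop–Gromov package) regarded as a static super Ricci flow,
`I_{(p,0)}(r) = (1/rⁿ) ∫₀^{r²/(4π)} (n/(2τ)) Vol B(p, √(2nτ log(r²/(4πτ)))) dτ`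
and `lim_{r→∞} I_{(p,0)}(r) = ν(g)`. -/
theorem stmt9 {M : Type*} [MetricSpace M] [CompleteSpace M] [MeasurableSpace M] [BorelSpace M]
    (n : ℕ) (hn : 1 ≤ n) (μ : Measure M)
    (ω : ℝ) (hω : ω = π ^ ((n:ℝ)/2) / Real.Gamma ((n:ℝ)/2 + 1))
    (hRicciNonnegBG : ∀ p : M,
      AntitoneOn (fun r => (μ (ball p r)).toReal / (ω * r^n)) (Ioi 0))
    (hsmallScale : ∀ p : M,
      Tendsto (fun r => (μ (ball p r)).toReal / (ω * r^n)) (nhdsWithin 0 (Ioi 0)) (nhds 1))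
    (p : M) (ν : ℝ)
    (hν : Tendsto (fun r => (μ (ball p r)).toReal / (ω * r^n)) atTop (nhds ν)) :
    (∀ r : ℝ, 0 < r → staticI n μ p r
        = (1 / r^n) * ∫ τ in Ioo (0:ℝ) (r^2 / (4 * π)), ((n:ℝ) / (2 * τ)) *
            (μ (ball p (Real.sqrt (2 * n * τ * Real.log (r^2 / (4 * π * τ)))))).toReal)
    ∧ Tendsto (staticI n μ p) atTop (nhds ν) :=
  stmt9_general n hn μ ω hω hRicciNonnegBG hsmallScale p ν hν
end
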